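/- arXiv:2111.07016 — 7 statements merged into one kernel-verified Lean document; each statement's English description precedes it below -/
import Mathlib

section
/- Let E be a finite-dimensional real inner product space, let B ⊆ E be convex, and let f : E → ℝ be differentiable with gradient ∇f that is L-Lipschitz on B for some L > 0. Fix c ∈ (0,1) and x ∈ B. If a step size α satisfies 0 < α ≤ 2(1−c)/L and x − α∇f(x) ∈ B, then the Armijo condition holds: f(x − α∇f(x)) ≤ f(x) − c·α·‖∇f(x)‖². -/
open Set

theorem armijo_of_small_step
    {E : Type*} [NormedAddCommGroup E] [InnerProductSpace ℝ E] [FiniteDimensional ℝ E]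
    (B : Set E) (hB : Convex ℝ B)
    (f : E → ℝ) (hf : Differentiable ℝ f)
    (L : ℝ) (hL : 0 < L)
    (hLip : ∀ x ∈ B, ∀ y ∈ B, ‖gradient f x - gradient f y‖ ≤ L * ‖x - y‖)
    (c : ℝ) (hc : c ∈ Set.Ioo (0 : ℝ) 1)
    (x : E) (hx : x ∈ B)
    (α : ℝ) (hα0 : 0 < α) (hα : α ≤ 2 * (1 - c) / L)
    (hxα : x - α • gradient f x ∈ B) :
    f (x - α • gradient f x) ≤ f x - c * α * ‖gradient f x‖ ^ 2 := by
  set g := gradient f x with hg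
  set v : E := -(α • g) with hv
  have hy : x - α • g = x + v := by simp [hv, sub_eq_add_neg]
  -- the line map
  set γ : ℝ → E := fun t => x + t • v with hγ
  have hγmem : ∀ t ∈ Icc (0:ℝ) 1, γ t ∈ B := by
    intro t ht
    have := hB hx hxα (by linarith [ht.2] : (0:ℝ) ≤ 1 - t) ht.1 (by ring)
    convert this using 1
    simp only [hγ, hy.symm]
    module
  have hγderiv : ∀ t : ℝ, HasDerivAt γ v t := by
    intro t
    have := ((hasDerivAt_id t).smul_const v).const_add x
    rw [one_smul] at this
    exact this
  -- derivative of f ∘ γ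
  have hφ : ∀ t : ℝ, HasDerivAt (fun s => f (γ s)) (inner ℝ (gradient f (γ t)) v : ℝ) t := by
    intro t
    have h1 := ((hf (γ t)).hasGradientAt.hasFDerivAt).comp_hasDerivAt t (hγderiv t)
    exact h1
  -- auxiliary function
  set ψ : ℝ → ℝ := fun t => f (γ t) - t * (inner ℝ g v : ℝ) - L * t ^ 2 / 2 * ‖v‖ ^ 2 with hψ
  have hψderiv : ∀ t : ℝ, HasDerivAt ψ
      ((inner ℝ (gradient f (γ t)) v : ℝ) - (inner ℝ g v : ℝ) - L * t * ‖v‖ ^ 2) t := by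
    intro t
    have h2 : HasDerivAt (fun t : ℝ => t * (inner ℝ g v : ℝ)) (inner ℝ g v : ℝ) t := by
      simpa using (hasDerivAt_id t).mul_const (inner ℝ g v : ℝ)
    have h3 : HasDerivAt (fun t : ℝ => L * t ^ 2 / 2 * ‖v‖ ^ 2) (L * t * ‖v‖ ^ 2) t := by
      have := (hasDerivAt_pow 2 t).const_mul L
      have := (this.div_const 2).mul_const (‖v‖ ^ 2)
      refine this.congr_deriv ?_
      ring
    exact ((hφ t).sub h2).sub h3
  have hψnonpos : ∀ t ∈ Ioo (0:ℝ) 1,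
      (inner ℝ (gradient f (γ t)) v : ℝ) - (inner ℝ g v : ℝ) - L * t * ‖v‖ ^ 2 ≤ 0 := by
    intro t ht
    have htmem : γ t ∈ B := hγmem t ⟨le_of_lt ht.1, le_of_lt ht.2⟩
    have hgx : γ 0 = x := by simp [hγ]
    have hlip := hLip (γ t) htmem x hx
    have hdist : ‖γ t - x‖ = t * ‖v‖ := by
      simp only [hγ]
      rw [add_sub_cancel_left, norm_smul, Real.norm_eq_abs, abs_of_pos ht.1]
    have key : (inner ℝ (gradient f (γ t) - g) v : ℝ) ≤ L * t * ‖v‖ ^ 2 := by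
      calc (inner ℝ (gradient f (γ t) - g) v : ℝ) ≤ ‖gradient f (γ t) - g‖ * ‖v‖ :=
            real_inner_le_norm _ _
        _ ≤ (L * ‖γ t - x‖) * ‖v‖ := by
            apply mul_le_mul_of_nonneg_right _ (norm_nonneg _)
            exact hlip
        _ = L * t * ‖v‖ ^ 2 := by rw [hdist]; ring
    have : (inner ℝ (gradient f (γ t)) v : ℝ) - (inner ℝ g v : ℝ)
        = (inner ℝ (gradient f (γ t) - g) v : ℝ) := by rw [inner_sub_left]
    linarith
  -- ψ is antitone on [0,1]
  have hcont : ContinuousOn ψ (Icc 0 1) := fun t _ =>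
    ((hψderiv t).differentiableAt).continuousAt.continuousWithinAt
  have hanti : AntitoneOn ψ (Icc (0:ℝ) 1) := by
    apply antitoneOn_of_deriv_nonpos (convex_Icc 0 1) hcont
    · intro t ht
      exact ((hψderiv t).differentiableAt).differentiableWithinAt
    · intro t ht
      rw [interior_Icc] at ht
      rw [(hψderiv t).deriv]
      exact hψnonpos t ht
  have h01 := hanti (left_mem_Icc.mpr zero_le_one) (right_mem_Icc.mpr zero_le_one) zero_le_one
  have hγ0 : γ 0 = x := by simp [hγ]
  have hγ1 : γ 1 = x + v := by simp [hγ]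
  have hψ0 : ψ 0 = f x := by simp [hψ, hγ0]
  have hψ1 : ψ 1 = f (x + v) - (inner ℝ g v : ℝ) - L / 2 * ‖v‖ ^ 2 := by
    simp [hψ, hγ1]
  rw [hψ0, hψ1] at h01
  -- compute inner products and norms
  have hinner : (inner ℝ g v : ℝ) = -α * ‖g‖ ^ 2 := by
    rw [hv, inner_neg_right, real_inner_smul_right, real_inner_self_eq_norm_sq]
    ring
  have hnv : ‖v‖ ^ 2 = α ^ 2 * ‖g‖ ^ 2 := by
    rw [hv, norm_neg, norm_smul, Real.norm_eq_abs, abs_of_pos hα0, mul_pow]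
  rw [hinner, hnv] at h01
  -- final arithmetic
  have hαL : L * α ≤ 2 * (1 - c) := by
    rw [le_div_iff₀ hL] at hα
    linarith
  have hg2 : (0:ℝ) ≤ ‖g‖ ^ 2 := sq_nonneg _
  have : f (x + v) ≤ f x - α * ‖g‖ ^ 2 + L / 2 * (α ^ 2 * ‖g‖ ^ 2) := by linarith
  rw [hy]
  have hstep : L / 2 * (α ^ 2 * ‖g‖ ^ 2) ≤ (1 - c) * α * ‖g‖ ^ 2 := by
    have : L * α ≤ 2 * (1 - c) := hαL
    nlinarith [hg2, hα0.le]
  linarith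
end

section
/- Let E be a finite-dimensional real inner product space, let B ⊆ E be convex, and let f : E → ℝ be differentiable with gradient ∇f that is L-Lipschitz on B for some L > 0. Fix c ∈ (0,1), γ ∈ (0,1), and x ∈ B, and suppose x − γ^j∇f(x) ∈ B for all natural numbers j. If m is the smallest natural number such that the Armijo condition holds at x with step size γ^m (i.e., f(x − γ^m∇f(x)) ≤ f(x) − c·γ^m·‖∇f(x)‖²), then the accepted step size satisfies γ^m ≥ min(1, 2γ(1−c)/L). -/
open InnerProductSpace

local notation "⟪" x ", " y "⟫" => @inner ℝ _ _ x y

lemma descent_lemma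
    {E : Type*} [NormedAddCommGroup E] [InnerProductSpace ℝ E] [FiniteDimensional ℝ E]
    (f : E → ℝ) (hf : Differentiable ℝ f)
    (L : ℝ) (hL : 0 < L) (x v : E)
    (hLip : ∀ t ∈ Set.Icc (0:ℝ) 1, ‖gradient f (x + t • v) - gradient f x‖ ≤ L * ‖t • v‖) :
    f (x + v) ≤ f x + ⟪gradient f x, v⟫ + L / 2 * ‖v‖ ^ 2 := by
  set g : ℝ → ℝ := fun t => f (x + t • v) - t * ⟪gradient f x, v⟫ - L / 2 * t ^ 2 * ‖v‖ ^ 2 with hg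
  have hder : ∀ t : ℝ, HasDerivAt g
      (⟪gradient f (x + t • v), v⟫ - ⟪gradient f x, v⟫ - L / 2 * (2 * t) * ‖v‖ ^ 2) t := by
    intro t
    have h1 : HasDerivAt (fun t : ℝ => x + t • v) v t := by
      simpa using ((hasDerivAt_id t).smul_const v).const_add x
    have h2 : HasDerivAt (fun t : ℝ => f (x + t • v)) ⟪gradient f (x + t • v), v⟫ t := by
      have := ((hf (x + t • v)).hasGradientAt.hasFDerivAt).comp_hasDerivAt t h1
      convert this using 1
      · rfl
      · rfl
      · rfl
      · exact InnerProductSpace.toDual_apply_apply.symm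
    have h3 : HasDerivAt (fun t : ℝ => t * ⟪gradient f x, v⟫) ⟪gradient f x, v⟫ t := by
      simpa using (hasDerivAt_id t).mul_const (⟪gradient f x, v⟫)
    have h4 : HasDerivAt (fun t : ℝ => L / 2 * t ^ 2 * ‖v‖ ^ 2)
        (L / 2 * (2 * t) * ‖v‖ ^ 2) t := by
      have := ((hasDerivAt_pow 2 t).const_mul (L / 2)).mul_const (‖v‖ ^ 2)
      simpa [mul_comm, mul_assoc, mul_left_comm] using this
    exact (h2.sub h3).sub h4
  have hanti : AntitoneOn g (Set.Icc 0 1) := by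
    apply antitoneOn_of_deriv_nonpos (convex_Icc 0 1)
    · exact fun t _ => ((hder t).continuousAt).continuousWithinAt
    · exact fun t _ => ((hder t).differentiableAt).differentiableWithinAt
    · intro t ht
      rw [interior_Icc] at ht
      rw [(hder t).deriv]
      have key : ⟪gradient f (x + t • v) - gradient f x, v⟫ ≤ L * t * ‖v‖ ^ 2 := by
        calc ⟪gradient f (x + t • v) - gradient f x, v⟫
            ≤ ‖gradient f (x + t • v) - gradient f x‖ * ‖v‖ := real_inner_le_norm _ _
          _ ≤ L * ‖t • v‖ * ‖v‖ := by
              gcongr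
              exact hLip t ⟨ht.1.le, ht.2.le⟩
          _ = L * t * ‖v‖ ^ 2 := by
              rw [norm_smul, Real.norm_eq_abs, abs_of_pos ht.1]; ring
      rw [inner_sub_left] at key
      nlinarith [key]
  have := hanti (Set.left_mem_Icc.2 zero_le_one) (Set.right_mem_Icc.2 zero_le_one) zero_le_one
  simp only [hg] at this
  simp only [zero_smul, add_zero, one_smul, zero_mul, one_mul] at this
  nlinarith [this]

theorem backtracking_step_lower_bound
    {E : Type*} [NormedAddCommGroup E] [InnerProductSpace ℝ E] [FiniteDimensional ℝ E]
    (B : Set E) (hB : Convex ℝ B)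
    (f : E → ℝ) (hf : Differentiable ℝ f)
    (L : ℝ) (hL : 0 < L)
    (hLip : ∀ x ∈ B, ∀ y ∈ B, ‖gradient f x - gradient f y‖ ≤ L * ‖x - y‖)
    (c : ℝ) (hc : c ∈ Set.Ioo (0 : ℝ) 1)
    (γ : ℝ) (hγ : γ ∈ Set.Ioo (0 : ℝ) 1)
    (x : E) (hx : x ∈ B)
    (hxj : ∀ j : ℕ, x - γ ^ j • gradient f x ∈ B)
    (m : ℕ)
    (hm : f (x - γ ^ m • gradient f x) ≤ f x - c * γ ^ m * ‖gradient f x‖ ^ 2)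
    (hmin : ∀ j < m,
      ¬ (f (x - γ ^ j • gradient f x) ≤ f x - c * γ ^ j * ‖gradient f x‖ ^ 2)) :
    γ ^ m ≥ min 1 (2 * γ * (1 - c) / L) := by
  obtain ⟨hγ0, hγ1⟩ := hγ
  obtain ⟨hc0, hc1⟩ := hc
  rcases Nat.eq_zero_or_pos m with hm0 | hmpos
  · subst hm0; simpa using min_le_left 1 (2 * γ * (1 - c) / L)
  -- m ≥ 1; consider j = m - 1 which failed the Armijo condition
  set k := m - 1 with hk
  have hkm : k < m := Nat.sub_lt hmpos one_pos
  have hfail := hmin k hkm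
  set g := gradient f x with hgdef
  have hgne : g ≠ 0 := by
    intro h
    apply hfail
    rw [hgdef] at h ⊢
    simp [h]
  set α := γ ^ k with hα
  have hα0 : 0 < α := pow_pos hγ0 k
  -- descent lemma with v = -α • g
  have hdesc : f (x - α • g) ≤ f x + ⟪g, -α • g⟫ + L / 2 * ‖-α • g‖ ^ 2 := by
    have hLip' : ∀ t ∈ Set.Icc (0:ℝ) 1,
        ‖gradient f (x + t • (-α • g)) - gradient f x‖ ≤ L * ‖t • (-α • g)‖ := by
      intro t ht
      have hmem : x + t • (-α • g) ∈ B := by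
        have hseg := hB.segment_subset hx (hxj k)
        have : x + t • ((x - α • g) - x) ∈ B := by
          apply hseg
          rw [segment_eq_image']
          exact ⟨t, ht, rfl⟩
        simpa [sub_sub_cancel_left, ← hgdef] using this
      have := hLip _ hmem x hx
      simpa [smul_smul] using this
    have := descent_lemma f hf L hL x (-α • g) hLip'
    rw [sub_eq_add_neg, ← neg_smul]
    exact this
  have hinner : ⟪g, -α • g⟫ = -α * ‖g‖ ^ 2 := by
    rw [real_inner_smul_right, real_inner_self_eq_norm_sq]
  have hnorm : ‖-α • g‖ ^ 2 = α ^ 2 * ‖g‖ ^ 2 := by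
    rw [norm_smul, Real.norm_eq_abs, abs_neg, abs_of_pos hα0, mul_pow]
  rw [hinner, hnorm] at hdesc
  -- failure of Armijo at k gives lower bound on α
  have hfail' : f x - c * α * ‖g‖ ^ 2 < f (x - α • g) := by
    push_neg at hfail
    exact hfail
  have hgn : 0 < ‖g‖ := norm_pos_iff.mpr hgne
  have hg2 : 0 < ‖g‖ ^ 2 := by positivity
  have hαlb : 2 * (1 - c) / L < α := by
    have h1 : f x - c * α * ‖g‖ ^ 2 < f x + (-α * ‖g‖ ^ 2) + L / 2 * (α ^ 2 * ‖g‖ ^ 2) :=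
      lt_of_lt_of_le hfail' hdesc
    rw [div_lt_iff₀ hL]
    nlinarith [h1, hg2, hα0]
  have hγm : γ ^ m = γ * α := by
    rw [hα, ← pow_succ']
    congr 1
    omega
  have : 2 * γ * (1 - c) / L ≤ γ ^ m := by
    rw [hγm]
    have : 2 * γ * (1 - c) / L = γ * (2 * (1 - c) / L) := by ring
    rw [this]
    exact mul_le_mul_of_nonneg_left hαlb.le hγ0.le
  exact le_trans (min_le_right _ _) this
end

section
/- Let E be a finite-dimensional real inner product space, f : E → ℝ differentiable, f* ∈ ℝ, L₁, L₂ > 0, and let φ : ℝ → ℝ be concave, differentiable, with φ′ > 0 on (0, ∞). Let x, x⁺ ∈ E satisfy: f(x) ≥ f(x⁺) ≥ f* with f(x) > f*; the Kurdyka–Łojasiewicz inequality φ′(f(x) − f*)·‖∇f(x)‖ ≥ 1; the sufficient decrease f(x) − f(x⁺) ≥ L₂·‖x⁺ − x‖²; and the relative error bound ‖∇f(x)‖ ≤ L₁·‖x⁺ − x‖. Then φ(f(x) − f*) − φ(f(x⁺) − f*) ≥ (L₂/L₁)·‖x⁺ − x‖. -/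
theorem kl_single_step_estimate
    {E : Type*} [NormedAddCommGroup E] [InnerProductSpace ℝ E] [FiniteDimensional ℝ E]
    (f : E → ℝ) (hf : Differentiable ℝ f)
    (fstar : ℝ) (L₁ L₂ : ℝ) (hL₁ : 0 < L₁) (hL₂ : 0 < L₂)
    (φ : ℝ → ℝ) (hφconc : ConcaveOn ℝ Set.univ φ) (hφdiff : Differentiable ℝ φ)
    (hφ' : ∀ t > 0, 0 < deriv φ t)
    (x xp : E)
    (hord : f x ≥ f xp) (hlb : f xp ≥ fstar) (hgt : f x > fstar)
    (hKL : deriv φ (f x - fstar) * ‖gradient f x‖ ≥ 1)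
    (hdec : f x - f xp ≥ L₂ * ‖xp - x‖ ^ 2)
    (herr : ‖gradient f x‖ ≤ L₁ * ‖xp - x‖) :
    φ (f x - fstar) - φ (f xp - fstar) ≥ (L₂ / L₁) * ‖xp - x‖ := by
  set a := f x - fstar with ha
  set b := f xp - fstar with hb
  have ha0 : 0 < a := by simp [ha]; linarith
  have hd0 : 0 < ‖xp - x‖ := by
    rcases (norm_nonneg (xp - x)).lt_or_eq with h | h
    · exact h
    · exfalso
      have hg0 : ‖gradient f x‖ = 0 := le_antisymm (by rw [← h] at herr; linarith) (norm_nonneg _)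
      rw [hg0, mul_zero] at hKL; linarith
  have hba : b < a := by
    have : 0 < L₂ * ‖xp - x‖ ^ 2 := by positivity
    simp only [ha, hb]; nlinarith
  have hg0 : 0 < ‖gradient f x‖ := by
    by_contra h
    push_neg at h
    have : ‖gradient f x‖ = 0 := le_antisymm h (norm_nonneg _)
    rw [this, mul_zero] at hKL; linarith
  -- concavity: φ a - φ b ≥ deriv φ a * (a - b)
  have hconv : ConvexOn ℝ Set.univ (-φ) := hφconc.neg
  have hslope := hconv.slope_le_deriv (Set.mem_univ b) (Set.mem_univ a) hba
    (hφdiff a).neg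
  have hdn : deriv (-φ) a = -deriv φ a := by
    rw [show (-φ) = fun y => -φ y from rfl, deriv.fun_neg]
  rw [hdn] at hslope
  have hsl : slope (-φ) b a = (φ b - φ a) / (a - b) := by
    simp [slope_def_field, Pi.neg_apply]
    ring
  rw [hsl] at hslope
  have hab : 0 < a - b := by linarith
  have key : φ a - φ b ≥ deriv φ a * (a - b) := by
    have := (div_le_iff₀ hab).mp hslope
    nlinarith
  -- deriv φ a ≥ 1 / ‖grad‖ ≥ 1 / (L₁ ‖d‖)
  have hderiv_ge : deriv φ a ≥ 1 / (L₁ * ‖xp - x‖) := by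
    rw [ge_iff_le, div_le_iff₀ (by positivity)]
    calc (1:ℝ) ≤ deriv φ a * ‖gradient f x‖ := hKL
    _ ≤ deriv φ a * (L₁ * ‖xp - x‖) :=
        mul_le_mul_of_nonneg_left herr (hφ' a ha0).le
  have hab_ge : a - b ≥ L₂ * ‖xp - x‖ ^ 2 := by simp only [ha, hb]; linarith
  calc φ a - φ b ≥ deriv φ a * (a - b) := key
    _ ≥ (1 / (L₁ * ‖xp - x‖)) * (L₂ * ‖xp - x‖ ^ 2) := by
        apply mul_le_mul hderiv_ge hab_ge (by positivity) (hφ' a ha0).le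
    _ = (L₂ / L₁) * ‖xp - x‖ := by field_simp
end

section
/- Let E be a finite-dimensional real inner product space and O : E → ℝ differentiable with ∇O being L_O-Lipschitz on E, where L_O ≥ 0. Let β ≥ ϱ > 0 and let X̄⁻, X̄, X̄⁺, λ, λ⁺, y ∈ E satisfy the proximal-gradient optimality relations λ⁺ − ∇O(X̄) = (β − ϱ)(X̄⁺ − X̄) and λ − ∇O(X̄⁻) = (β − ϱ)(X̄ − X̄⁻), together with the dual update λ⁺ = λ + ϱ(y − X̄⁺). Then the dual update increases the augmented Lagrangian coupling term by exactly ⟨λ⁺ − λ, y − X̄⁺⟩ = (1/ϱ)·‖λ⁺ − λ‖², and this increase is bounded: ‖λ⁺ − λ‖ ≤ (β − ϱ)·‖X̄⁺ − X̄‖ + (β − ϱ + L_O)·‖X̄ − X̄⁻‖, hence (1/ϱ)·‖λ⁺ − λ‖² ≤ (2(β − ϱ)²/ϱ)·‖X̄⁺ − X̄‖² + (2(β − ϱ + L_O)²/ϱ)·‖X̄ − X̄⁻‖². -/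
open scoped RealInnerProductSpace

theorem dual_update_increase_bound
    {E : Type*} [NormedAddCommGroup E] [InnerProductSpace ℝ E] [FiniteDimensional ℝ E]
    (O : E → ℝ) (hO : Differentiable ℝ O)
    (LO : ℝ) (hLO : 0 ≤ LO)
    (hLip : ∀ x y : E, ‖gradient O x - gradient O y‖ ≤ LO * ‖x - y‖)
    (β ϱ : ℝ) (hϱ : 0 < ϱ) (hβϱ : ϱ ≤ β)
    (Xm X Xp lam lamp y : E)
    (hopt1 : lamp - gradient O X = (β - ϱ) • (Xp - X))
    (hopt0 : lam - gradient O Xm = (β - ϱ) • (X - Xm))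
    (hdual : lamp = lam + ϱ • (y - Xp)) :
    ⟪lamp - lam, y - Xp⟫ = (1 / ϱ) * ‖lamp - lam‖ ^ 2 ∧
    ‖lamp - lam‖ ≤ (β - ϱ) * ‖Xp - X‖ + (β - ϱ + LO) * ‖X - Xm‖ ∧
    (1 / ϱ) * ‖lamp - lam‖ ^ 2 ≤
      (2 * (β - ϱ) ^ 2 / ϱ) * ‖Xp - X‖ ^ 2 +
      (2 * (β - ϱ + LO) ^ 2 / ϱ) * ‖X - Xm‖ ^ 2 := by
  have hd : lamp - lam = ϱ • (y - Xp) := by rw [hdual]; abel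
  have h1 : ⟪lamp - lam, y - Xp⟫ = (1 / ϱ) * ‖lamp - lam‖ ^ 2 := by
    have : y - Xp = (1 / ϱ) • (lamp - lam) := by
      rw [hd, smul_smul, one_div_mul_cancel hϱ.ne', one_smul]
    rw [this, real_inner_smul_right, real_inner_self_eq_norm_sq]
  have hdecomp : lamp - lam =
      (β - ϱ) • (Xp - X) - (β - ϱ) • (X - Xm) + (gradient O X - gradient O Xm) := by
    rw [← hopt1, ← hopt0]; abel
  have h2 : ‖lamp - lam‖ ≤ (β - ϱ) * ‖Xp - X‖ + (β - ϱ + LO) * ‖X - Xm‖ := by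
    calc ‖lamp - lam‖
        ≤ ‖(β - ϱ) • (Xp - X) - (β - ϱ) • (X - Xm)‖ + ‖gradient O X - gradient O Xm‖ := by
          rw [hdecomp]; exact norm_add_le _ _
      _ ≤ ‖(β - ϱ) • (Xp - X)‖ + ‖(β - ϱ) • (X - Xm)‖ + LO * ‖X - Xm‖ :=
          add_le_add (norm_sub_le _ _) (hLip X Xm)
      _ ≤ (β - ϱ) * ‖Xp - X‖ + (β - ϱ + LO) * ‖X - Xm‖ := by
          rw [norm_smul, norm_smul, Real.norm_eq_abs, abs_of_nonneg (by linarith)]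
          ring_nf; nlinarith [norm_nonneg (X - Xm)]
  refine ⟨h1, h2, ?_⟩
  have hn1 := norm_nonneg (lamp - lam)
  have hn2 := norm_nonneg (Xp - X)
  have hn3 := norm_nonneg (X - Xm)
  have hkey : ‖lamp - lam‖ ^ 2 ≤ ((β - ϱ) * ‖Xp - X‖ + (β - ϱ + LO) * ‖X - Xm‖) ^ 2 :=
    pow_le_pow_left₀ hn1 h2 2
  rw [div_mul_eq_mul_div, div_mul_eq_mul_div, div_mul_eq_mul_div, ← add_div,
    div_le_div_iff₀ hϱ hϱ]
  nlinarith [hkey, sq_nonneg ((β - ϱ) * ‖Xp - X‖ - (β - ϱ + LO) * ‖X - Xm‖), hϱ.le, mul_pos hϱ hϱ]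
end

section
/- Let E be a finite-dimensional real inner product space and O : E → ℝ differentiable with ∇O being L_O-Lipschitz on E, where L_O ≥ 0. Let β, ϱ > 0 and Y, λ, X̄ ∈ E. Define the linearized proximal update X̄⁺ = X̄ − (1/β)·[∇O(X̄) + ϱ(X̄ − Y) − λ] and the dual update λ⁺ = λ + ϱ(Y − X̄⁺). Then O(X̄⁺) − O(X̄) ≤ ⟨λ⁺, X̄⁺ − X̄⟩ + (L_O/2 − (β − ϱ))·‖X̄⁺ − X̄‖². -/
open scoped RealInnerProductSpace

lemma descent_lemma_aux
    {E : Type*} [NormedAddCommGroup E] [InnerProductSpace ℝ E] [FiniteDimensional ℝ E]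
    (O : E → ℝ) (hO : Differentiable ℝ O)
    (LO : ℝ) (hLO : 0 ≤ LO)
    (hLip : ∀ x y : E, ‖gradient O x - gradient O y‖ ≤ LO * ‖x - y‖)
    (x v : E) :
    O (x + v) - O x ≤ ⟪gradient O x, v⟫ + LO / 2 * ‖v‖ ^ 2 := by
  have hd : ∀ t : ℝ, HasDerivAt (fun t : ℝ => O (x + t • v))
      ⟪gradient O (x + t • v), v⟫ t := by
    intro t
    have h1 : HasDerivAt (fun t : ℝ => x + t • v) v t := by
      simpa using ((hasDerivAt_id t).smul_const v).const_add x
    have h2 := (hO (x + t • v)).hasGradientAt.hasFDerivAt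
    have h3 := h2.comp_hasDerivAt t h1
    simpa [InnerProductSpace.toDual_apply_apply, Function.comp_def] using h3
  set φ : ℝ → ℝ := fun t =>
    O (x + t • v) - t * ⟪gradient O x, v⟫ - LO / 2 * t ^ 2 * ‖v‖ ^ 2 with hφ
  have hdφ : ∀ t : ℝ, HasDerivAt φ
      (⟪gradient O (x + t • v), v⟫ - ⟪gradient O x, v⟫ - LO * t * ‖v‖ ^ 2) t := by
    intro t
    have h1 : HasDerivAt (fun t : ℝ => t * ⟪gradient O x, v⟫) ⟪gradient O x, v⟫ t := by
      simpa using (hasDerivAt_id t).mul_const ⟪gradient O x, v⟫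
    have h2 : HasDerivAt (fun t : ℝ => LO / 2 * t ^ 2 * ‖v‖ ^ 2)
        (LO * t * ‖v‖ ^ 2) t := by
      have := ((hasDerivAt_pow 2 t).const_mul (LO / 2)).mul_const (‖v‖ ^ 2)
      rw [show LO * t * ‖v‖ ^ 2 = LO / 2 * (((2 : ℕ) : ℝ) * t ^ (2 - 1)) * ‖v‖ ^ 2 by push_cast; ring]
      exact this
    simpa [hφ, Pi.sub_def] using ((hd t).sub h1).sub h2
  have hder : ∀ t ∈ Set.Ioo (0 : ℝ) 1, deriv φ t ≤ 0 := by
    intro t ht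
    rw [(hdφ t).deriv]
    have hb : ⟪gradient O (x + t • v) - gradient O x, v⟫ ≤ LO * t * ‖v‖ ^ 2 := by
      calc ⟪gradient O (x + t • v) - gradient O x, v⟫
          ≤ ‖gradient O (x + t • v) - gradient O x‖ * ‖v‖ := real_inner_le_norm _ _
        _ ≤ (LO * ‖(x + t • v) - x‖) * ‖v‖ := by
            exact mul_le_mul_of_nonneg_right (hLip _ _) (norm_nonneg _)
        _ = LO * t * ‖v‖ ^ 2 := by
            rw [add_sub_cancel_left, norm_smul, Real.norm_eq_abs,
              abs_of_nonneg ht.1.le]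
            ring
    rw [inner_sub_left] at hb
    linarith
  have hcont : ContinuousOn φ (Set.Icc (0 : ℝ) 1) :=
    fun t _ => ((hdφ t).continuousAt).continuousWithinAt
  have hdiff : DifferentiableOn ℝ φ (interior (Set.Icc (0 : ℝ) 1)) :=
    fun t _ => ((hdφ t).differentiableAt).differentiableWithinAt
  have hanti : AntitoneOn φ (Set.Icc (0 : ℝ) 1) := by
    apply antitoneOn_of_deriv_nonpos (convex_Icc (0 : ℝ) 1) hcont hdiff
    intro t ht
    rw [interior_Icc] at ht
    exact hder t ht
  have h01 : φ 1 ≤ φ 0 := hanti (Set.left_mem_Icc.2 zero_le_one)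
    (Set.right_mem_Icc.2 zero_le_one) zero_le_one
  simp only [hφ, one_smul, zero_smul, add_zero, one_pow, zero_pow, one_mul,
    zero_mul, mul_zero, sub_zero] at h01
  linarith

theorem objective_change_bound
    {E : Type*} [NormedAddCommGroup E] [InnerProductSpace ℝ E] [FiniteDimensional ℝ E]
    (O : E → ℝ) (hO : Differentiable ℝ O)
    (LO : ℝ) (hLO : 0 ≤ LO)
    (hLip : ∀ x y : E, ‖gradient O x - gradient O y‖ ≤ LO * ‖x - y‖)
    (β ϱ : ℝ) (hβ : 0 < β) (hϱ : 0 < ϱ)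
    (Y lam X : E)
    (Xp : E) (hXp : Xp = X - (1 / β) • (gradient O X + ϱ • (X - Y) - lam))
    (lamp : E) (hlamp : lamp = lam + ϱ • (Y - Xp)) :
    O Xp - O X ≤ ⟪lamp, Xp - X⟫ + (LO / 2 - (β - ϱ)) * ‖Xp - X‖ ^ 2 := by
  set v := Xp - X with hv
  have hgrad : gradient O X = lamp + (ϱ - β) • v := by
    have h1 : (1 / β) • (gradient O X + ϱ • (X - Y) - lam) = X - Xp := by
      rw [hXp]; abel
    have h2 : gradient O X + ϱ • (X - Y) - lam = β • (X - Xp) := by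
      have := congrArg (fun z => β • z) h1
      simpa [smul_smul, mul_one_div_cancel hβ.ne', mul_inv_cancel₀ hβ.ne'] using this
    have h3 : gradient O X = β • (X - Xp) - ϱ • (X - Y) + lam := by
      rw [← h2]; abel
    rw [h3, hlamp, hv]
    module
  have hdes := descent_lemma_aux O hO LO hLO hLip X v
  have hXv : X + v = Xp := by rw [hv]; abel
  rw [hXv] at hdes
  have hinner : ⟪gradient O X, v⟫ = ⟪lamp, v⟫ + (ϱ - β) * ‖v‖ ^ 2 := by
    rw [hgrad, inner_add_left, real_inner_smul_left, real_inner_self_eq_norm_sq]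
  rw [hinner] at hdes
  have : (LO / 2 - (β - ϱ)) * ‖v‖ ^ 2 = (ϱ - β) * ‖v‖ ^ 2 + LO / 2 * ‖v‖ ^ 2 := by ring
  rw [this]
  linarith
end

section
/- Let L_O ≥ 0 and β > 2√2·L_O (so β > 0), set the penalty parameter ϱ = β and the Lyapunov weight κ = β/4. Let (l_k)_{k≥0} be a sequence of reals and (a_k)_{k≥0} a sequence of nonnegative reals satisfying, for every k ≥ 1, l_{k+1} − l_k ≤ ((L_O − β)/2)·a_k + (2L_O²/β)·a_{k−1}. Then the Lyapunov sequence l_k + κ·a_{k−1} is monotonically decreasing: l_{k+1} + κ·a_k ≤ l_k + κ·a_{k−1} for all k ≥ 1. -/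
theorem lyapunov_monotone
    (LO : ℝ) (hLO : 0 ≤ LO)
    (β : ℝ) (hβ : 2 * Real.sqrt 2 * LO < β) (hβpos : 0 < β)
    (ϱ : ℝ) (hϱ : ϱ = β)
    (κ : ℝ) (hκ : κ = β / 4)
    (l : ℕ → ℝ) (a : ℕ → ℝ) (ha : ∀ k, 0 ≤ a k)
    (hdec : ∀ k, 1 ≤ k →
      l (k + 1) - l k ≤ ((LO - β) / 2) * a k + (2 * LO ^ 2 / β) * a (k - 1)) :
    ∀ k, 1 ≤ k → l (k + 1) + κ * a k ≤ l k + κ * a (k - 1) := by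
  intro k hk
  have h := hdec k hk
  have hs : Real.sqrt 2 ^ 2 = 2 := Real.sq_sqrt (by norm_num)
  have h8 : 8 * LO ^ 2 < β ^ 2 := by
    have h1 : 0 ≤ 2 * Real.sqrt 2 * LO := by positivity
    have h2 : 0 < β - 2 * Real.sqrt 2 * LO := by linarith
    nlinarith [hs, sq_nonneg (β - 2 * Real.sqrt 2 * LO)]
  have key : (2 * LO ^ 2 / β) * a (k - 1) ≤ (β / 4) * a (k - 1) := by
    apply mul_le_mul_of_nonneg_right _ (ha _)
    rw [div_le_div_iff₀ hβpos (by norm_num)]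
    nlinarith
  have hcoef : ((LO - β) / 2) * a k + (β / 4) * a k ≤ 0 := by
    nlinarith [ha k]
  rw [hκ]
  nlinarith [ha k, ha (k-1)]
end

section
/- Let E be a finite-dimensional real inner product space, O : E → ℝ differentiable with ∇O being L_O-Lipschitz on E (L_O ≥ 0), β ≥ ϱ > 0, and let X̄⁻, X̄, X̄⁺, λ, λ⁺, g ∈ E satisfy λ⁺ = λ + ϱ(g − X̄⁺) together with λ⁺ − ∇O(X̄) = (β − ϱ)(X̄⁺ − X̄) and λ − ∇O(X̄⁻) = (β − ϱ)(X̄ − X̄⁻). Then the primal consensus residual satisfies ‖g − X̄⁺‖ = (1/ϱ)·‖λ⁺ − λ‖ and is bounded by ‖g − X̄⁺‖² ≤ (2(β − ϱ)²/ϱ²)·‖X̄⁺ − X̄‖² + (2(β − ϱ + L_O)²/ϱ²)·‖X̄ − X̄⁻‖². -/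
theorem consensus_residual_bound
    {E : Type*} [NormedAddCommGroup E] [InnerProductSpace ℝ E] [FiniteDimensional ℝ E]
    (O : E → ℝ) (hO : Differentiable ℝ O)
    (LO : ℝ) (hLO : 0 ≤ LO)
    (hLip : ∀ x y : E, ‖gradient O x - gradient O y‖ ≤ LO * ‖x - y‖)
    (β ϱ : ℝ) (hϱ : 0 < ϱ) (hβϱ : ϱ ≤ β)
    (Xm X Xp lam lamp g : E)
    (hdual : lamp = lam + ϱ • (g - Xp))
    (hopt1 : lamp - gradient O X = (β - ϱ) • (Xp - X))
    (hopt0 : lam - gradient O Xm = (β - ϱ) • (X - Xm)) :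
    ‖g - Xp‖ = (1 / ϱ) * ‖lamp - lam‖ ∧
    ‖g - Xp‖ ^ 2 ≤ (2 * (β - ϱ) ^ 2 / ϱ ^ 2) * ‖Xp - X‖ ^ 2 +
      (2 * (β - ϱ + LO) ^ 2 / ϱ ^ 2) * ‖X - Xm‖ ^ 2 := by
  have hd : lamp - lam = ϱ • (g - Xp) := by rw [hdual]; abel
  have h1 : ‖g - Xp‖ = (1 / ϱ) * ‖lamp - lam‖ := by
    rw [hd, norm_smul, Real.norm_eq_abs, abs_of_pos hϱ]
    field_simp
  refine ⟨h1, ?_⟩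
  have hsplit : lamp - lam =
      (β - ϱ) • (Xp - X) - (β - ϱ) • (X - Xm) + (gradient O X - gradient O Xm) := by
    have := hopt1
    have := hopt0
    have e : lamp - lam = (lamp - gradient O X) - (lam - gradient O Xm)
        + (gradient O X - gradient O Xm) := by abel
    rw [e, hopt1, hopt0]
  have hnorm : ‖lamp - lam‖ ≤ (β - ϱ) * ‖Xp - X‖ + (β - ϱ + LO) * ‖X - Xm‖ := by
    rw [hsplit]
    calc ‖(β - ϱ) • (Xp - X) - (β - ϱ) • (X - Xm) + (gradient O X - gradient O Xm)‖
        ≤ ‖(β - ϱ) • (Xp - X)‖ + ‖(β - ϱ) • (X - Xm)‖ + ‖gradient O X - gradient O Xm‖ := by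
          refine le_trans (norm_add_le _ _) ?_
          exact add_le_add_left (norm_sub_le _ _) _
      _ ≤ (β - ϱ) * ‖Xp - X‖ + (β - ϱ) * ‖X - Xm‖ + LO * ‖X - Xm‖ := by
          have h1 : ‖(β - ϱ) • (Xp - X)‖ = (β - ϱ) * ‖Xp - X‖ := by
            rw [norm_smul, Real.norm_eq_abs, abs_of_nonneg (by linarith)]
          have h2 : ‖(β - ϱ) • (X - Xm)‖ = (β - ϱ) * ‖X - Xm‖ := by
            rw [norm_smul, Real.norm_eq_abs, abs_of_nonneg (by linarith)]
          rw [h1, h2]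
          exact add_le_add_right (hLip X Xm) _
      _ = (β - ϱ) * ‖Xp - X‖ + (β - ϱ + LO) * ‖X - Xm‖ := by ring
  have hgn : ‖g - Xp‖ ^ 2 = (1 / ϱ) ^ 2 * ‖lamp - lam‖ ^ 2 := by
    rw [h1]; ring
  have hsq : ‖lamp - lam‖ ^ 2 ≤ 2 * ((β - ϱ) * ‖Xp - X‖) ^ 2 + 2 * ((β - ϱ + LO) * ‖X - Xm‖) ^ 2 := by
    have h0 : (0:ℝ) ≤ ‖lamp - lam‖ := norm_nonneg _
    nlinarith [sq_nonneg ((β - ϱ) * ‖Xp - X‖ - (β - ϱ + LO) * ‖X - Xm‖),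
      sq_nonneg ((β - ϱ) * ‖Xp - X‖ + (β - ϱ + LO) * ‖X - Xm‖ + ‖lamp - lam‖)]
  rw [hgn]
  have hϱ2 : (0:ℝ) < ϱ ^ 2 := by positivity
  calc (1 / ϱ) ^ 2 * ‖lamp - lam‖ ^ 2
      ≤ (1 / ϱ) ^ 2 * (2 * ((β - ϱ) * ‖Xp - X‖) ^ 2 + 2 * ((β - ϱ + LO) * ‖X - Xm‖) ^ 2) := by
        apply mul_le_mul_of_nonneg_left hsq (by positivity)
    _ = (2 * (β - ϱ) ^ 2 / ϱ ^ 2) * ‖Xp - X‖ ^ 2 +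
      (2 * (β - ϱ + LO) ^ 2 / ϱ ^ 2) * ‖X - Xm‖ ^ 2 := by field_simp
end
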